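/- Let c ≥ 7 and let F = Σ_{k ∈ ℤ/cℤ} x_k x_{k+1} x_{k+2}² in ℚ[x_i : i ∈ ℤ/cℤ]. The first partial derivatives ∂_0 F, ∂_1 F, …, ∂_{c−1} F are linearly independent over ℚ; in particular, if a : ℤ/cℤ → ℚ satisfies Σ_i a_i ∂_i F = 0 then a = 0, so no nonzero linear form annihilates F and the ideal I_F = Ann(F) is nondegenerate. -/
import Mathlib

open MvPolynomial Finsupp

private lemma shift_ne {c : ℕ} (hc : 7 ≤ c) (x : ZMod c) {a b : ℕ} (ha : a < 7) (hb : b < 7)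
    (h : a ≠ b) : x + (a : ZMod c) ≠ x + (b : ZMod c) := by
  intro hh
  have h2 : (a : ZMod c) = b := add_left_cancel hh
  have h3 := congrArg ZMod.val h2
  haveI : NeZero c := ⟨by omega⟩
  rw [ZMod.val_cast_of_lt (by omega), ZMod.val_cast_of_lt (by omega)] at h3
  omega

private lemma sn {c : ℕ} (hc : 7 ≤ c) (x : ZMod c) {a b : ℕ} (ha : a < 7) (hb : b < 7)
    (h : a ≠ b) : x + (OfNat.ofNat a : ℕ) ≠ x + (OfNat.ofNat b : ℕ) :=
  shift_ne hc x ha hb h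

private lemma m_inj {c : ℕ} (hc : 7 ≤ c) {k i : ZMod c}
    (h : single (k+1) (1:ℕ) + single (k+2) 2 = single (i+1) 1 + single (i+2) 2) : k = i := by
  have e12 : i + 1 ≠ i + 2 := by simpa using shift_ne hc i (a:=1) (b:=2) (by norm_num) (by norm_num) (by norm_num)
  have h2 := DFunLike.congr_fun h (i+2)
  simp only [Finsupp.add_apply, Finsupp.single_apply] at h2
  by_cases e1 : k + 2 = i + 2
  · exact add_right_cancel e1
  · exfalso
    rw [if_neg e1, if_neg e12] at h2
    by_cases e3 : k + 1 = i + 2 <;> simp [e3] at h2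

private lemma lemA {c : ℕ} (hc : 7 ≤ c) (k i : ZMod c) :
    single k (1:ℕ) + single (k+2) 2 ≠ single (i+1) 1 + single (i+2) 2 := by
  have e02 : ∀ x : ZMod c, x ≠ x + 2 := fun x => by
    simpa using shift_ne hc x (a:=0) (b:=2) (by norm_num) (by norm_num) (by norm_num)
  have e13 : ∀ x : ZMod c, x + 1 ≠ x + 3 := fun x => by
    simpa using shift_ne hc x (a:=1) (b:=3) (by norm_num) (by norm_num) (by norm_num)
  have e23 : ∀ x : ZMod c, x + 2 ≠ x + 3 := fun x => by
    simpa using shift_ne hc x (a:=2) (b:=3) (by norm_num) (by norm_num) (by norm_num)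
  intro h
  have h2 := DFunLike.congr_fun h k
  simp only [Finsupp.add_apply, Finsupp.single_apply, if_pos rfl,
    if_neg (Ne.symm (e02 k))] at h2
  -- h2 : 1 + 0 = (if i+1 = k then 1 else 0) + (if i+2 = k then 2 else 0)
  have hk : i + 1 = k := by
    by_cases a1 : i + 1 = k <;> by_cases a2 : i + 2 = k <;> simp [a1, a2] at h2 <;> try assumption
  subst hk
  have e01 : ∀ x : ZMod c, x ≠ x + 1 := fun x => by
    simpa using shift_ne hc x (a:=0) (b:=1) (by norm_num) (by norm_num) (by norm_num)
  have key1 : i + 1 ≠ i + 1 + 2 := e02 (i+1)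
  have key2 : i + 2 ≠ i + 1 + 2 := by
    have h4 : i + 1 + 2 = i + 2 + 1 := by ring
    rw [h4]; exact e01 (i+2)
  have h3 := DFunLike.congr_fun h (i + 1 + 2)
  simp [Finsupp.add_apply, Finsupp.single_apply, key1, key2] at h3

private lemma lemB {c : ℕ} (hc : 7 ≤ c) (k i : ZMod c) :
    single k (1:ℕ) + single (k+1) 1 + single (k+2) 1 ≠ single (i+1) 1 + single (i+2) 2 := by
  have e12 : i + 1 ≠ i + 2 := by
    simpa using shift_ne hc i (a:=1) (b:=2) (by norm_num) (by norm_num) (by norm_num)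
  intro h
  have h2 := DFunLike.congr_fun h (i+2)
  simp only [Finsupp.add_apply, Finsupp.single_apply, if_neg e12, if_pos rfl] at h2
  -- LHS sum of three 0/1 indicators at distinct points = 0 + 2
  have e01 : k ≠ k + 1 := by
    simpa using shift_ne hc k (a:=0) (b:=1) (by norm_num) (by norm_num) (by norm_num)
  have e02 : k ≠ k + 2 := by
    simpa using shift_ne hc k (a:=0) (b:=2) (by norm_num) (by norm_num) (by norm_num)
  have e12' : k + 1 ≠ k + 2 := by
    simpa using shift_ne hc k (a:=1) (b:=2) (by norm_num) (by norm_num) (by norm_num)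
  have h10 : (1 : ZMod c) ≠ 0 := by
    simpa using shift_ne hc 0 (a:=1) (b:=0) (by norm_num) (by norm_num) (by norm_num)
  have h20 : (2 : ZMod c) ≠ 0 := by
    simpa using shift_ne hc 0 (a:=2) (b:=0) (by norm_num) (by norm_num) (by norm_num)
  by_cases a1 : k = i + 2 <;> by_cases a2 : k + 1 = i + 2 <;> by_cases a3 : k + 2 = i + 2 <;>
    first
      | (exact e01 (a1.trans a2.symm))
      | (exact e02 (a1.trans a3.symm))
      | (exact e12' (a2.trans a3.symm))
      | simp [a1, a2, a3, h10, h20] at h2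

private lemma term_eq {c : ℕ} (k : ZMod c) :
    (X k * X (k+1) * X (k+2)^2 : MvPolynomial (ZMod c) ℚ)
      = monomial (single k 1 + single (k+1) 1 + single (k+2) 2) 1 := by
  simp [X_pow_eq_monomial, monomial_mul, X, monomial_pow, Finsupp.smul_single]

private lemma coeff_term {c : ℕ} (hc : 7 ≤ c) (i j k : ZMod c) :
    coeff (single (i+1) 1 + single (i+2) 2)
      (pderiv j (X k * X (k+1) * X (k+2)^2 : MvPolynomial (ZMod c) ℚ)) =
    if j = i ∧ k = i then 1 else 0 := by
  have e01 : ∀ x : ZMod c, x ≠ x + 1 := fun x => by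
    simpa using shift_ne hc x (a:=0) (b:=1) (by norm_num) (by norm_num) (by norm_num)
  have e02 : ∀ x : ZMod c, x ≠ x + 2 := fun x => by
    simpa using shift_ne hc x (a:=0) (b:=2) (by norm_num) (by norm_num) (by norm_num)
  have e12 : ∀ x : ZMod c, x + 1 ≠ x + 2 := fun x => by
    simpa using shift_ne hc x (a:=1) (b:=2) (by norm_num) (by norm_num) (by norm_num)
  rw [term_eq, pderiv_monomial, coeff_monomial]
  by_cases hjk : j = k
  · subst hjk
    have hsub : (single j 1 + single (j+1) 1 + single (j+2) 2) - single j 1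
        = single (j+1) (1:ℕ) + single (j+2) 2 := by
      rw [add_assoc, add_tsub_cancel_left]
    have hval : (single j 1 + single (j+1) 1 + single (j+2) 2 : ZMod c →₀ ℕ) j = 1 := by
      simp [Finsupp.single_apply, Ne.symm (e01 j), Ne.symm (e02 j)]
    rw [hsub, hval]
    by_cases hk : j = i
    · subst hk; simp
    · rw [if_neg (fun h => hk (m_inj hc h)), if_neg (fun h => hk h.1)]
  · by_cases hjk1 : j = k + 1
    · subst hjk1
      have hsub : (single k 1 + single (k+1) 1 + single (k+2) 2) - single (k+1) 1
          = single k (1:ℕ) + single (k+2) 2 := by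
        have : (single k 1 + single (k+1) 1 + single (k+2) 2 : ZMod c →₀ ℕ)
            = single (k+1) 1 + (single k 1 + single (k+2) 2) := by abel
        rw [this, add_tsub_cancel_left]
      rw [hsub, if_neg (lemA hc k i), if_neg (by rintro ⟨h1, h2⟩; exact e01 k (h1.trans h2.symm).symm)]
    · by_cases hjk2 : j = k + 2
      · subst hjk2
        have hsub : (single k 1 + single (k+1) 1 + single (k+2) 2) - single (k+2) 1
            = single k (1:ℕ) + single (k+1) 1 + single (k+2) 1 := by
          have : (single k 1 + single (k+1) 1 + single (k+2) 2 : ZMod c →₀ ℕ)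
              = (single k 1 + single (k+1) 1 + single (k+2) 1) + single (k+2) 1 := by
            rw [show (2:ℕ) = 1 + 1 from rfl, Finsupp.single_add]; abel
          rw [this, add_tsub_cancel_right]
        rw [hsub, if_neg (lemB hc k i), if_neg (by rintro ⟨h1, h2⟩; exact e02 k (h1.trans h2.symm).symm)]
      · have hval : (single k 1 + single (k+1) 1 + single (k+2) 2 : ZMod c →₀ ℕ) j = 0 := by
          simp only [Finsupp.add_apply, Finsupp.single_apply]
          rw [if_neg (fun h => hjk h.symm), if_neg (fun h => hjk1 h.symm),
            if_neg (fun h => hjk2 h.symm)]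
          rfl
        rw [hval]
        simp only [Nat.cast_zero, mul_zero, ite_self]
        rw [if_neg (by rintro ⟨h1, h2⟩; exact hjk (h1.trans h2.symm))]

theorem first_partials_linearIndependent (c : ℕ) (hc : 7 ≤ c) [NeZero c]
    (F : MvPolynomial (ZMod c) ℚ)
    (hF : F = ∑ k : ZMod c, X k * X (k + 1) * X (k + 2) ^ 2) :
    LinearIndependent ℚ (fun i : ZMod c => pderiv i F) := by
  rw [Fintype.linearIndependent_iff]
  intro g hg i
  have key : ∀ j, coeff (single (i+1) 1 + single (i+2) 2) (pderiv j F)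
      = if j = i then 1 else 0 := by
    intro j
    rw [hF, map_sum, coeff_sum]
    simp only [coeff_term hc i j]
    by_cases hj : j = i <;> simp [hj]
  have h0 : coeff (single (i+1) 1 + single (i+2) 2) (∑ j, g j • pderiv j F) = g i := by
    rw [coeff_sum]
    simp only [coeff_smul, smul_eq_mul, key]
    simp
  rw [hg, coeff_zero] at h0
  exact h0.symm
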